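/- arXiv:2511.21534 — 4 statements merged into one kernel-verified Lean document; each statement's English description precedes it below -/
import Mathlib

section
/- Weighting identity (key step in the proof of Theorem 1): under consistency, positivity, and weak conditional exchangeability, for each a ∈ {0,1}: E[ 1{A=a}·Y / e_a ] = E[ Y^(a) · ε_a ]. Consequently the naive functional satisfies ψ = E[Y^(1)·ε₁] − E[Y^(0)·ε₀]. -/
/-!
Conditioning on `𝓕` turns the inverse pseudo-propensity `1/e_a`, which is
`𝓖 ⊆ 𝓕`-measurable, into a constant. By consistency `1{A=a}·Y = 1{A=a}·Y^(a)`, and by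
conditional exchangeability `E[1{A=a}·Y^(a) | 𝓕] = π_a · E[Y^(a) | 𝓕]`. Hence
`E[1{A=a}·Y / e_a] = E[(π_a / e_a) · E[Y^(a) | 𝓕]] = E[ε_a · Y^(a)]`.
The conditional product formula is obtained by integrating the ordinary one against the regular
conditional distribution given `𝓕`, under which `Y^(a)` and `A` are almost surely independent.
-/

open MeasureTheory ProbabilityTheory Set

noncomputable def ind {Ω : Type*} (s : Set Ω) : Ω → ℝ := s.indicator fun _ => 1

section Indicator

variable {Ω : Type*}

lemma ind_mul_eq_indicator (s : Set Ω) (f : Ω → ℝ) :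
    (fun ω => ind s ω * f ω) = s.indicator f := by
  ext ω
  by_cases hω : ω ∈ s <;> simp [ind, hω]

lemma ind_mul_eq_ind_mul_of_eq_add {A : Ω → ℕ} {Y : Ω → ℝ} {Ya : ℕ → Ω → ℝ}
    (hY : ∀ ω, Y ω = ind {ω' | A ω' = 1} ω * Ya 1 ω + ind {ω' | A ω' = 0} ω * Ya 0 ω)
    {a : ℕ} (ha : a ≤ 1) (ω : Ω) :
    ind {ω' | A ω' = a} ω * Y ω = ind {ω' | A ω' = a} ω * Ya a ω := by
  interval_cases a <;> by_cases h0 : A ω = 0 <;> by_cases h1 : A ω = 1 <;> simp_all [ind]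

variable [MeasurableSpace Ω] {G : Ω → ℕ} {Y : ℕ → Ω → ℝ} {n : ℕ}

lemma measurable_sum_ind_mul (hG : Measurable G) (hY : ∀ g ≤ n, Measurable (Y g)) :
    Measurable fun ω => ∑ g ∈ Finset.range (n + 1), ind {ω' | G ω' = g} ω * Y g ω := by
  refine Finset.measurable_fun_sum _ fun g hg => ?_
  rw [ind_mul_eq_indicator]
  exact (hY g (Nat.lt_succ_iff.mp (Finset.mem_range.mp hg))).indicator
    (hG (measurableSet_singleton g))

lemma memLp_sum_ind_mul {p : ENNReal} {μ : Measure Ω} (hG : Measurable G)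
    (hY : ∀ g ≤ n, MemLp (Y g) p μ) :
    MemLp (fun ω => ∑ g ∈ Finset.range (n + 1), ind {ω' | G ω' = g} ω * Y g ω) p μ := by
  refine memLp_finsetSum _ (f := fun g ω => ind {ω' | G ω' = g} ω * Y g ω) fun g hg => ?_
  rw [ind_mul_eq_indicator]
  exact (hY g (Nat.lt_succ_iff.mp (Finset.mem_range.mp hg))).indicator
    (hG (measurableSet_singleton g))

lemma MeasureTheory.Integrable.mul_ind {μ : Measure Ω} {f : Ω → ℝ} (hf : Integrable f μ)
    {s : Set Ω} (hs : MeasurableSet s) : Integrable (f * ind s) μ := by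
  have h : ind s * f = s.indicator f := ind_mul_eq_indicator s f
  rw [mul_comm, h]
  exact hf.indicator hs

end Indicator

namespace ProbabilityTheory.CondIndepFun

variable {Ω : Type*} {m mΩ : MeasurableSpace Ω} [StandardBorelSpace Ω] {μ : Measure Ω}
  [IsFiniteMeasure μ] {hm : m ≤ mΩ} {X Z : Ω → ℝ}

lemma ae_indepFun_condExpKernel (h : CondIndepFun m hm X Z μ)
    (hX : Measurable X) (hZ : Measurable Z) :
    ∀ᵐ ω ∂μ, IndepFun X Z (condExpKernel μ m ω) := by
  have hmap := ae_of_ae_trim hm ((condIndepFun_iff_map_prod_eq_prod_map_map hX hZ).mp h)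
  filter_upwards [hmap] with ω hω
  rw [indepFun_iff_map_prod_eq_prod_map_map hX.aemeasurable hZ.aemeasurable]
  simpa [Kernel.map_apply _ (hX.prodMk hZ), Kernel.map_apply _ hX, Kernel.map_apply _ hZ,
    Kernel.prod_apply] using hω

lemma condExp_mul_ae_eq (h : CondIndepFun m hm X Z μ) (hX : Measurable X) (hZ : Measurable Z)
    (hXi : Integrable X μ) (hZi : Integrable Z μ) (hXZi : Integrable (X * Z) μ) :
    μ[X * Z | m] =ᵐ[μ] μ[X | m] * μ[Z | m] := by
  filter_upwards [h.ae_indepFun_condExpKernel hX hZ,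
    condExp_ae_eq_integral_condExpKernel hm hXZi, condExp_ae_eq_integral_condExpKernel hm hXi,
    condExp_ae_eq_integral_condExpKernel hm hZi] with ω hind hXZω hXω hZω
  rw [Pi.mul_apply, hXZω, hXω, hZω]
  exact hind.integral_mul_eq_mul_integral hX.aestronglyMeasurable hZ.aestronglyMeasurable

lemma integral_mul_mul_eq_integral_mul_condExp_mul (h : CondIndepFun m hm X Z μ)
    (hX : Measurable X) (hZ : Measurable Z) (hXi : Integrable X μ) (hZi : Integrable Z μ)
    (hXZi : Integrable (X * Z) μ) {w : Ω → ℝ} (hw : StronglyMeasurable[m] w)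
    (hwXZi : Integrable (w * (X * Z)) μ) (hwZXi : Integrable (w * μ[Z | m] * X) μ) :
    ∫ ω, (w * (X * Z)) ω ∂μ = ∫ ω, (w * μ[Z | m] * X) ω ∂μ := by
  have hpull : μ[w * μ[Z | m] * X | m] =ᵐ[μ] w * μ[Z | m] * μ[X | m] :=
    condExp_mul_of_stronglyMeasurable_left (hw.mul stronglyMeasurable_condExp) hwZXi hXi
  calc ∫ ω, (w * (X * Z)) ω ∂μ
      = ∫ ω, μ[w * (X * Z) | m] ω ∂μ := (integral_condExp hm).symm
    _ = ∫ ω, (w * (μ[X | m] * μ[Z | m])) ω ∂μ := integral_congr_ae <|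
        (condExp_mul_of_stronglyMeasurable_left hw hwXZi hXZi).trans
          ((Filter.EventuallyEq.refl _ w).mul (h.condExp_mul_ae_eq hX hZ hXi hZi hXZi))
    _ = ∫ ω, μ[w * μ[Z | m] * X | m] ω ∂μ := by
        refine integral_congr_ae ?_
        filter_upwards [hpull] with ω hω
        rw [hω]
        simp only [Pi.mul_apply]
        ring
    _ = ∫ ω, (w * μ[Z | m] * X) ω ∂μ := integral_condExp hm

end ProbabilityTheory.CondIndepFun

theorem weighting_identity_general
    {Ω : Type*} [mΩ : MeasurableSpace Ω] [StandardBorelSpace Ω]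
    (μ : Measure Ω) [IsProbabilityMeasure μ]
    (gmax : ℕ)
    (A G : Ω → ℕ)
    (hAmeas : Measurable A) (hGmeas : Measurable G)
    (Ypo : ℕ → ℕ → Ω → ℝ)
    (hYpomeas : ∀ a ≤ 1, ∀ g ≤ gmax, Measurable (Ypo a g))
    (hYposq : ∀ a ≤ 1, ∀ g ≤ gmax, MemLp (Ypo a g) 2 μ)
    (Ya : ℕ → Ω → ℝ)
    (hYa : ∀ a ω, Ya a ω = ∑ g ∈ Finset.range (gmax + 1), ind {ω' | G ω' = g} ω * Ypo a g ω)
    (Y : Ω → ℝ)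
    (hY : ∀ ω, Y ω = ind {ω' | A ω' = 1} ω * Ya 1 ω + ind {ω' | A ω' = 0} ω * Ya 0 ω)
    (mG mF : MeasurableSpace Ω) (hGF : mG ≤ mF) (hF : mF ≤ mΩ)
    (π e ε : ℕ → Ω → ℝ)
    (hπ : ∀ a, π a = μ[ind {ω | A ω = a} | mF])
    (he : ∀ a, e a = μ[ind {ω | A ω = a} | mG])
    (hexch : ∀ a ≤ 1, CondIndepFun mF hF (Ya a) A μ)
    (hε : ∀ a ω, ε a ω = π a ω / e a ω)
    (hεYint : ∀ a ≤ 1, Integrable (fun ω => Ya a ω * ε a ω) μ)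
    (hwint : ∀ a ≤ 1, Integrable (fun ω => ind {ω' | A ω' = a} ω * Y ω / e a ω) μ) :
    (∀ a ≤ 1,
      ∫ ω, ind {ω' | A ω' = a} ω * Y ω / e a ω ∂μ = ∫ ω, Ya a ω * ε a ω ∂μ)
    ∧ (∫ ω, ind {ω' | A ω' = 1} ω * Y ω / e 1 ω ∂μ)
        - (∫ ω, ind {ω' | A ω' = 0} ω * Y ω / e 0 ω ∂μ)
      = (∫ ω, Ya 1 ω * ε 1 ω ∂μ) - ∫ ω, Ya 0 ω * ε 0 ω ∂μ := by
  let _ : MeasurableSpace Ω := mΩ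
  have weighting : ∀ a ≤ 1,
      ∫ ω, ind {ω' | A ω' = a} ω * Y ω / e a ω ∂μ = ∫ ω, Ya a ω * ε a ω ∂μ := by
    intro a ha
    set Z := ind {ω' | A ω' = a}
    have hYa_eq : Ya a = _ := funext (hYa a)
    have hYam : Measurable (Ya a) :=
      hYa_eq ▸ measurable_sum_ind_mul hGmeas (hYpomeas a ha)
    have hYai : Integrable (Ya a) μ :=
      (hYa_eq ▸ memLp_sum_ind_mul hGmeas (hYposq a ha)).integrable one_le_two
    have hZ : MeasurableSet {ω' | A ω' = a} := hAmeas (measurableSet_singleton a)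
    have hexchZ : CondIndepFun mF hF (Ya a) Z μ :=
      (hexch a ha).comp measurable_id (measurable_of_countable (ind {a}))
    have hw : StronglyMeasurable[mF] (e a)⁻¹ :=
      ((he a ▸ stronglyMeasurable_condExp).mono hGF).measurable.inv.stronglyMeasurable
    have hconsistency : ∀ ω, Z ω * Y ω / e a ω = ((e a)⁻¹ * (Ya a * Z)) ω := fun ω => by
      simp only [Z, ind_mul_eq_ind_mul_of_eq_add hY ha ω, Pi.mul_apply, Pi.inv_apply]
      ring
    have hmew : ∀ ω, ((e a)⁻¹ * μ[Z | mF] * Ya a) ω = Ya a ω * ε a ω := fun ω => by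
      simp only [hε, hπ, Pi.mul_apply, Pi.inv_apply]
      ring
    calc ∫ ω, Z ω * Y ω / e a ω ∂μ = ∫ ω, ((e a)⁻¹ * (Ya a * Z)) ω ∂μ :=
          integral_congr_ae (.of_forall hconsistency)
      _ = ∫ ω, ((e a)⁻¹ * μ[Z | mF] * Ya a) ω ∂μ :=
          hexchZ.integral_mul_mul_eq_integral_mul_condExp_mul hYam
            ((measurable_of_countable (ind {a})).comp hAmeas) hYai
            ((integrable_const 1).indicator hZ) (hYai.mul_ind hZ) hw
            ((hwint a ha).congr (.of_forall hconsistency))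
            ((hεYint a ha).congr (.of_forall fun ω => (hmew ω).symm))
      _ = ∫ ω, Ya a ω * ε a ω ∂μ := integral_congr_ae (.of_forall hmew)
  exact ⟨weighting, by rw [weighting 1 le_rfl, weighting 0 zero_le_one]⟩

/-- **Weighting identity (key step in the proof of Theorem 1).**  In the reference
population, under consistency, positivity, and weak conditional exchangeability, for each
`a ∈ {0,1}` one has `E[1{A=a}·Y / e_a] = E[Y^(a) · ε_a]`, where `e_a = P(A=a|𝓖)` is the
pseudo-propensity score and `ε_a = π_a/e_a` is the MEW score.  Consequently the naive
functional satisfies `ψ = E[Y^(1)·ε₁] − E[Y^(0)·ε₀]`. -/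
theorem weighting_identity
    {Ω : Type*} [mΩ : MeasurableSpace Ω] [StandardBorelSpace Ω] [Nonempty Ω]
    (μ : Measure Ω) [IsProbabilityMeasure μ]
    (gmax : ℕ)
    (A G : Ω → ℕ) (hA : ∀ ω, A ω ≤ 1) (hG : ∀ ω, G ω ≤ gmax)
    (hAmeas : Measurable A) (hGmeas : Measurable G)
    (Ypo : ℕ → ℕ → Ω → ℝ)
    (hYpomeas : ∀ a ≤ 1, ∀ g ≤ gmax, Measurable (Ypo a g))
    (hYposq : ∀ a ≤ 1, ∀ g ≤ gmax, MemLp (Ypo a g) 2 μ)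
    (Ya : ℕ → Ω → ℝ)
    (hYa : ∀ a ω, Ya a ω = ∑ g ∈ Finset.range (gmax + 1), ind {ω' | G ω' = g} ω * Ypo a g ω)
    (Y : Ω → ℝ)
    (hY : ∀ ω, Y ω = ind {ω' | A ω' = 1} ω * Ya 1 ω + ind {ω' | A ω' = 0} ω * Ya 0 ω)
    (mG mF : MeasurableSpace Ω) (hGF : mG ≤ mF) (hF : mF ≤ mΩ)
    (π e ε : ℕ → Ω → ℝ)
    (hπ : ∀ a, π a = μ[ind {ω | A ω = a} | mF])
    (he : ∀ a, e a = μ[ind {ω | A ω = a} | mG])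
    (hπpos : ∀ a ≤ 1, ∀ᵐ ω ∂μ, 0 < π a ω)
    (hepos : ∀ a ≤ 1, ∀ᵐ ω ∂μ, 0 < e a ω)
    (hexch : ∀ a ≤ 1, CondIndepFun mF hF (Ya a) A μ)
    (hε : ∀ a ω, ε a ω = π a ω / e a ω)
    (hεint : ∀ a ≤ 1, Integrable (ε a) μ)
    (hεYint : ∀ a ≤ 1, Integrable (fun ω => Ya a ω * ε a ω) μ)
    (hwint : ∀ a ≤ 1, Integrable (fun ω => ind {ω' | A ω' = a} ω * Y ω / e a ω) μ) :
    (∀ a ≤ 1,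
      ∫ ω, ind {ω' | A ω' = a} ω * Y ω / e a ω ∂μ = ∫ ω, Ya a ω * ε a ω ∂μ)
    ∧ (∫ ω, ind {ω' | A ω' = 1} ω * Y ω / e 1 ω ∂μ)
        - (∫ ω, ind {ω' | A ω' = 0} ω * Y ω / e 0 ω ∂μ)
      = (∫ ω, Ya 1 ω * ε 1 ω ∂μ) - ∫ ω, Ya 0 ω * ε 0 ω ∂μ :=
  weighting_identity_general (mΩ := mΩ) μ gmax A G hAmeas hGmeas Ypo hYpomeas hYposq Ya hYa Y hY mG
    mF hGF hF π e ε hπ he hexch hε hεYint hwint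
end

section
/- Variance bound for the MEW score (Section 3.2): for each a ∈ {0,1}, if 1/e_a is integrable then Var(ε_a) ≤ E[ (1 − e_a)/e_a ], i.e. σ_{ε_a} ≤ sqrt( E[ (1 − e_a)/e_a ] ). (The proof uses 0 ≤ π_a ≤ 1, the identity e_a = E[π_a | 𝓖] a.s., and E[ε_a] = 1.) -/
/-!
Condition on `𝓖` and pull out the `𝓖`-measurable `e`: since `E[π | 𝓖] = e`, we get
`E[π / e | 𝓖] = 1`, and since `0 ≤ π ≤ 1` forces `π² ≤ π`,
`E[(π / e)² | 𝓖] = E[π² | 𝓖] / e² ≤ 1 / e`. Hence `Var ε = E[ε²] - 1 ≤ E[1 / e] - 1`.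
-/

open MeasureTheory ProbabilityTheory Set

section

variable {Ω : Type*} {m m₀ : MeasurableSpace Ω} {μ : Measure Ω}

lemma condExp_div_of_stronglyMeasurable_right {f g : Ω → ℝ} (hg : StronglyMeasurable[m] g)
    (hfg : Integrable (f / g) μ) (hf : Integrable f μ) :
    μ[f / g | m] =ᵐ[μ] μ[f | m] / g := by
  simp only [div_eq_mul_inv] at hfg ⊢
  exact condExp_mul_of_stronglyMeasurable_right hg.measurable.inv.stronglyMeasurable hfg hf

lemma ae_sq_le_of_ae_mem_Icc {f : Ω → ℝ} (hf01 : ∀ᵐ ω ∂μ, f ω ∈ Icc 0 1) : f ^ 2 ≤ᵐ[μ] f := by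
  filter_upwards [hf01] with ω hω
  simpa [sq] using mul_le_of_le_one_left hω.1 hω.2

lemma MeasureTheory.Integrable.sq_of_ae_mem_Icc {f : Ω → ℝ} (hf : Integrable f μ)
    (hf01 : ∀ᵐ ω ∂μ, f ω ∈ Icc 0 1) : Integrable (f ^ 2) μ := by
  refine hf.mono (hf.aestronglyMeasurable.pow 2) ?_
  filter_upwards [ae_sq_le_of_ae_mem_Icc hf01, hf01] with ω hle hω
  simpa [abs_of_nonneg hω.1] using hle

lemma condExp_sq_le_condExp {f : Ω → ℝ} (hf : Integrable f μ)
    (hf01 : ∀ᵐ ω ∂μ, f ω ∈ Icc 0 1) : μ[f ^ 2 | m] ≤ᵐ[μ] μ[f | m] :=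
  condExp_mono (hf.sq_of_ae_mem_Icc hf01) hf (ae_sq_le_of_ae_mem_Icc hf01)

lemma ae_condExp_mem_Icc {f : Ω → ℝ} (hf01 : ∀ᵐ ω ∂μ, f ω ∈ Icc 0 1) :
    ∀ᵐ ω ∂μ, μ[f | m] ω ∈ Icc 0 1 := by
  filter_upwards [condExp_nonneg (m := m) (hf01.mono fun _ h => h.1),
    condExp_le_nonneg_const (m := m) zero_le_one (hf01.mono fun _ h => h.2)] with ω h0 h1
  exact ⟨h0, h1⟩

variable [IsProbabilityMeasure μ] {f g : Ω → ℝ}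

lemma integral_div_eq_one_of_condExp_ae_eq (hm : m ≤ m₀) (hf : Integrable f μ)
    (hg : StronglyMeasurable[m] g) (hfg : μ[f | m] =ᵐ[μ] g) (hgpos : ∀ᵐ ω ∂μ, 0 < g ω)
    (hint : Integrable (f / g) μ) : ∫ ω, (f / g) ω ∂μ = 1 := by
  have hcond : μ[f / g | m] =ᵐ[μ] fun _ => (1 : ℝ) := by
    filter_upwards [condExp_div_of_stronglyMeasurable_right hg hint hf, hfg, hgpos]
      with ω hdiv heq hpos
    rw [hdiv, Pi.div_apply, heq, div_self hpos.ne']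
  rw [← integral_condExp hm, integral_congr_ae hcond, integral_const, probReal_univ, one_smul]

lemma integral_sq_div_le_of_condExp_ae_eq (hm : m ≤ m₀) (hf : Integrable f μ)
    (hf01 : ∀ᵐ ω ∂μ, f ω ∈ Icc 0 1) (hg : StronglyMeasurable[m] g) (hfg : μ[f | m] =ᵐ[μ] g)
    (hgpos : ∀ᵐ ω ∂μ, 0 < g ω) (hsq : Integrable ((f / g) ^ 2) μ)
    (hginv : Integrable (fun ω => 1 / g ω) μ) :
    ∫ ω, ((f / g) ^ 2) ω ∂μ ≤ ∫ ω, 1 / g ω ∂μ := by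
  have hcond : μ[(f / g) ^ 2 | m] ≤ᵐ[μ] fun ω => 1 / g ω := by
    rw [div_pow] at hsq ⊢
    filter_upwards [condExp_sq_le_condExp (m := m) hf hf01, hfg, hgpos,
      condExp_div_of_stronglyMeasurable_right (hg.pow 2) hsq (hf.sq_of_ae_mem_Icc hf01)]
      with ω hle heq hpos hdiv
    rw [heq] at hle
    rw [hdiv, Pi.div_apply, Pi.pow_apply]
    calc μ[f ^ 2 | m] ω / g ω ^ 2 ≤ g ω / g ω ^ 2 := by gcongr
      _ = 1 / g ω := by field_simp
  rw [← integral_condExp hm]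
  exact integral_mono_ae integrable_condExp hginv hcond

theorem variance_div_condExp_le (hm : m ≤ m₀) (hf : Integrable f μ)
    (hf01 : ∀ᵐ ω ∂μ, f ω ∈ Icc 0 1) (hg : StronglyMeasurable[m] g) (hfg : μ[f | m] =ᵐ[μ] g)
    (hgpos : ∀ᵐ ω ∂μ, 0 < g ω) (hsq : MemLp (f / g) 2 μ)
    (hginv : Integrable (fun ω => 1 / g ω) μ) :
    variance (f / g) μ ≤ ∫ ω, (1 - g ω) / g ω ∂μ := by
  have hrhs : ∫ ω, (1 - g ω) / g ω ∂μ = ∫ ω, 1 / g ω ∂μ - 1 := by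
    calc ∫ ω, (1 - g ω) / g ω ∂μ = ∫ ω, (1 / g ω - 1) ∂μ := by
          refine integral_congr_ae ?_
          filter_upwards [hgpos] with ω hpos
          field_simp
      _ = ∫ ω, 1 / g ω ∂μ - 1 := by
          rw [integral_sub hginv (integrable_const 1), integral_const, probReal_univ, one_smul]
  rw [variance_eq_sub hsq, hrhs,
    integral_div_eq_one_of_condExp_ae_eq hm hf hg hfg hgpos (hsq.integrable one_le_two)]
  linarith [integral_sq_div_le_of_condExp_ae_eq hm hf hf01 hg hfg hgpos hsq.integrable_sq hginv]

end

theorem mew_score_variance_bound_general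
    {Ω : Type*} [mΩ : MeasurableSpace Ω]
    (μ : Measure Ω) [IsProbabilityMeasure μ]
    (A : Ω → ℕ)
    (mG mF : MeasurableSpace Ω) (hGF : mG ≤ mF) (hF : mF ≤ mΩ)
    (π e ε : ℕ → Ω → ℝ)
    (hπ : ∀ a, π a = μ[ind {ω | A ω = a} | mF])
    (he : ∀ a, e a = μ[ind {ω | A ω = a} | mG])
    (hepos : ∀ a ≤ 1, ∀ᵐ ω ∂μ, 0 < e a ω)
    (hε : ∀ a ω, ε a ω = π a ω / e a ω)
    (hεsq : ∀ a ≤ 1, MemLp (ε a) 2 μ)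
    (heinv : ∀ a ≤ 1, Integrable (fun ω => 1 / e a ω) μ) :
    ∀ a ≤ 1, variance (ε a) μ ≤ ∫ ω, (1 - e a ω) / e a ω ∂μ := by
  intro a ha
  have hε_eq : ε a = π a / e a := funext (hε a)
  have hind01 : ∀ ω, ind {ω | A ω = a} ω ∈ Icc 0 1 := fun ω =>
    ⟨indicator_nonneg (fun _ _ => zero_le_one) ω,
      indicator_apply_le' (fun _ => le_rfl) (fun _ => zero_le_one)⟩
  have hπ01 : ∀ᵐ ω ∂μ, π a ω ∈ Icc 0 1 := hπ a ▸ ae_condExp_mem_Icc (ae_of_all μ hind01)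
  have htower : μ[π a | mG] =ᵐ[μ] e a := by
    rw [hπ a, he a]
    exact condExp_condExp_of_le hGF hF
  rw [hε_eq]
  exact variance_div_condExp_le (hGF.trans hF) (hπ a ▸ integrable_condExp) hπ01
    (he a ▸ stronglyMeasurable_condExp) htower (hepos a ha) (hε_eq ▸ hεsq a ha) (heinv a ha)

/-- **Variance bound for the MEW score (Section 3.2).**  In the reference population, with
true propensity score `π a = P(A = a | 𝓕)` and pseudo-propensity score `e a = P(A = a | 𝓖)`
for `𝓖 ⊆ 𝓕`, both positive a.s., if the MEW score `ε a = π a / e a` is square-integrable and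
`1 / e a` is integrable, then `Var(ε_a) ≤ E[(1 − e_a) / e_a]` for each `a ∈ {0,1}`. -/
theorem mew_score_variance_bound
    {Ω : Type*} [mΩ : MeasurableSpace Ω]
    (μ : Measure Ω) [IsProbabilityMeasure μ]
    (A : Ω → ℕ) (hA : ∀ ω, A ω ≤ 1) (hAmeas : Measurable A)
    (mG mF : MeasurableSpace Ω) (hGF : mG ≤ mF) (hF : mF ≤ mΩ)
    (π e ε : ℕ → Ω → ℝ)
    (hπ : ∀ a, π a = μ[ind {ω | A ω = a} | mF])
    (he : ∀ a, e a = μ[ind {ω | A ω = a} | mG])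
    (hπpos : ∀ a ≤ 1, ∀ᵐ ω ∂μ, 0 < π a ω)
    (hepos : ∀ a ≤ 1, ∀ᵐ ω ∂μ, 0 < e a ω)
    (hε : ∀ a ω, ε a ω = π a ω / e a ω)
    (hεsq : ∀ a ≤ 1, MemLp (ε a) 2 μ)
    (heinv : ∀ a ≤ 1, Integrable (fun ω => 1 / e a ω) μ) :
    ∀ a ≤ 1, variance (ε a) μ ≤ ∫ ω, (1 - e a ω) / e a ω ∂μ :=
  mew_score_variance_bound_general (mΩ := mΩ) μ A mG mF hGF hF π e ε hπ he hepos hε hεsq heinv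
end

section
/- Transport identity (key step in the proof of Theorem 2): for s ∈ {1,2}, E[ Y^(1) − Y^(0) | S=s ] = Σ_{g=0}^{g_max} E[ τ(g) · P(G=g | S=s, 𝓗) ], where the outer expectation E is unconditional. Consequently φ_s = Σ_{g=0}^{g_max} Cov( τ(g), P(G=g|S=s,𝓗) ) + Σ_{g=0}^{g_max} E[τ(g)] · P(G=g | S=s). -/
/-!
Write `Y^(1) - Y^(0) = ∑_g 1{G=g} τ(g)`. Conditioning on `{S = s}` turns
`E[1{G=g} Y^(a,g) | S=s]` into `E[1{S=s, G=g} Y^(a,g)] / P(S=s)`. Since `{S=s, G=g}` is a level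
set of `(S,G)`, conditional independence of `Y^(a,g)` and `(S,G)` given `𝓗` lets us replace its
indicator by `P(S=s, G=g | 𝓗)`, and independence of `S` and `𝓗` factors this as
`P(S=s) · P(G=g | S=s, 𝓗)`. The same independence makes `P(· | S=s)` and `P` agree on `𝓗`, so
`E[P(G=g | S=s, 𝓗)] = P(G=g | S=s)`, which gives the covariance form.
-/

open MeasureTheory ProbabilityTheory Set

/-- The covariance of two real random variables, `Cov(f,g) = E[f·g] − E[f]·E[g]`. -/
noncomputable def cov {Ω : Type*} {m : MeasurableSpace Ω} (μ : MeasureTheory.Measure Ω)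
    (f g : Ω → ℝ) : ℝ :=
  (∫ ω, f ω * g ω ∂μ) - (∫ ω, f ω ∂μ) * ∫ ω, g ω ∂μ

section Indicator

variable {Ω : Type*} {mΩ : MeasurableSpace Ω}

lemma ind_mul_ind (s t : Set Ω) (ω : Ω) : ind s ω * ind t ω = ind (s ∩ t) ω :=
  (congrFun (inter_indicator_one (s := s) (t := t)) ω).symm

lemma norm_ind_le_one (s : Set Ω) (ω : Ω) : ‖ind s ω‖ ≤ 1 := by
  by_cases hs : ω ∈ s <;> simp [ind, hs]

lemma measurable_ind {m : MeasurableSpace Ω} {s : Set Ω} (hs : MeasurableSet[m] s) :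
    Measurable[m] (ind s) :=
  measurable_const.indicator hs

lemma integrable_ind (μ : Measure Ω) [IsFiniteMeasure μ] {s : Set Ω} (hs : MeasurableSet s) :
    Integrable (ind s) μ :=
  (integrable_const 1).indicator hs

lemma integral_ind (μ : Measure Ω) {s : Set Ω} (hs : MeasurableSet s) :
    ∫ ω, ind s ω ∂μ = μ.real s :=
  integral_indicator_one hs

lemma integral_ind_mul (μ : Measure Ω) {s : Set Ω} (hs : MeasurableSet s) (f : Ω → ℝ) :
    ∫ ω, ind s ω * f ω ∂μ = ∫ ω in s, f ω ∂μ := by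
  rw [← integral_indicator hs]
  congr 1 with ω
  by_cases h : ω ∈ s <;> simp [ind, h]

lemma MeasureTheory.Integrable.ind_mul {μ : Measure Ω} {f : Ω → ℝ} (hf : Integrable f μ)
    {s : Set Ω} (hs : MeasurableSet s) : Integrable (fun ω => ind s ω * f ω) μ :=
  hf.bdd_mul (measurable_ind hs).aestronglyMeasurable (ae_of_all _ (norm_ind_le_one s))

end Indicator

section ConditionalExpectation

variable {Ω : Type*} {m mΩ : MeasurableSpace Ω} {μ : Measure Ω}

lemma ae_norm_condExp_ind_le_one (hm : m ≤ mΩ) [IsFiniteMeasure μ] {s : Set Ω}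
    (hs : MeasurableSet s) : ∀ᵐ ω ∂μ, ‖μ[ind s|m] ω‖ ≤ 1 := by
  have h0 : 0 ≤ᵐ[μ] μ[ind s|m] :=
    condExp_nonneg (ae_of_all _ fun ω => indicator_nonneg (fun _ _ => zero_le_one) ω)
  have h1 : μ[ind s|m] ≤ᵐ[μ] μ[fun _ => (1 : ℝ)|m] :=
    condExp_mono (integrable_ind μ hs) (integrable_const 1)
      (ae_of_all _ fun ω => (le_abs_self _).trans (norm_ind_le_one s ω))
  rw [condExp_const hm (1 : ℝ)] at h1
  filter_upwards [h0, h1] with ω h0 h1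
  exact abs_le.2 ⟨(neg_nonpos.2 zero_le_one).trans h0, h1⟩

lemma integral_mul_condExp_of_stronglyMeasurable (hm : m ≤ mΩ) [SigmaFinite (μ.trim hm)]
    {q f : Ω → ℝ} (hq : StronglyMeasurable[m] q) (hqf : Integrable (fun ω => q ω * f ω) μ)
    (hf : Integrable f μ) :
    ∫ ω, q ω * μ[f|m] ω ∂μ = ∫ ω, q ω * f ω ∂μ :=
  calc ∫ ω, q ω * μ[f|m] ω ∂μ = ∫ ω, μ[q * f|m] ω ∂μ :=
        integral_congr_ae (condExp_mul_of_stronglyMeasurable_left hq hqf hf).symm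
    _ = ∫ ω, q ω * f ω ∂μ := integral_condExp hm

lemma integral_mul_eq_zero_of_setIntegral_preimage_eq_zero [IsFiniteMeasure μ] {X h : Ω → ℝ}
    (hX : Measurable X) (hh : Integrable h μ) (hXh : Integrable (fun ω => X ω * h ω) μ)
    (h0 : ∀ t, MeasurableSet t → ∫ ω in X ⁻¹' t, h ω ∂μ = 0) :
    ∫ ω, X ω * h ω ∂μ = 0 := by
  have hcond : (0 : Ω → ℝ) =ᵐ[μ] μ[h|MeasurableSpace.comap X inferInstance] :=
    ae_eq_condExp_of_forall_setIntegral_eq hX.comap_le hh (fun _ _ _ => integrableOn_zero)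
      (by rintro _ ⟨t, ht, rfl⟩ _; simp [h0 t ht]) aestronglyMeasurable_zero
  rw [← integral_mul_condExp_of_stronglyMeasurable hX.comap_le
    (comap_measurable X).stronglyMeasurable hXh hh]
  exact (integral_congr_ae (hcond.mono fun ω hω => by simp [← hω])).trans
    (integral_zero Ω ℝ)

end ConditionalExpectation

section Independence

variable {Ω : Type*} {m₁ m mΩ : MeasurableSpace Ω} {μ : Measure Ω} {E : Set Ω}

lemma integral_cond_eq_inv_mul_integral_ind_mul (hE : MeasurableSet E) (f : Ω → ℝ) :
    ∫ ω, f ω ∂μ[|E] = (μ.real E)⁻¹ * ∫ ω, ind E ω * f ω ∂μ := by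
  rw [ProbabilityTheory.cond, integral_smul_measure, integral_ind_mul μ hE, ENNReal.toReal_inv,
    smul_eq_mul, measureReal_def]

lemma MeasureTheory.Integrable.cond {f : Ω → ℝ} (hf : Integrable f μ) (hE0 : μ E ≠ 0) :
    Integrable f μ[|E] :=
  hf.restrict.smul_measure (ENNReal.inv_ne_top.2 hE0)

lemma cond_real_apply_eq_div (hE : MeasurableSet E) (A : Set Ω) :
    (μ[|E]).real A = μ.real (E ∩ A) / μ.real E := by
  rw [measureReal_def, cond_apply hE, ENNReal.toReal_mul, ENNReal.toReal_inv, div_eq_inv_mul,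
    measureReal_def, measureReal_def]

lemma trim_cond_eq_trim_of_indep [IsFiniteMeasure μ] (hm : m ≤ mΩ) (hm₁ : m₁ ≤ mΩ)
    (hind : Indep m₁ m μ) (hE : MeasurableSet[m₁] E) (hE0 : μ E ≠ 0) :
    (μ[|E]).trim hm = μ.trim hm := by
  refine @Measure.ext _ m _ _ fun A hA => ?_
  rw [trim_measurableSet_eq hm hA, trim_measurableSet_eq hm hA, cond_apply (hm₁ _ hE),
    (Indep_iff _ _ _).1 hind E A hE hA, ← mul_assoc,
    ENNReal.inv_mul_cancel hE0 (measure_ne_top μ E), one_mul]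

lemma integral_cond_eq_integral_of_indep [IsFiniteMeasure μ] (hm : m ≤ mΩ)
    (hm₁ : m₁ ≤ mΩ) (hind : Indep m₁ m μ) (hE : MeasurableSet[m₁] E) (hE0 : μ E ≠ 0)
    {ψ : Ω → ℝ} (hψ : StronglyMeasurable[m] ψ) :
    ∫ ω, ψ ω ∂μ[|E] = ∫ ω, ψ ω ∂μ := by
  rw [integral_trim hm hψ, trim_cond_eq_trim_of_indep hm hm₁ hind hE hE0,
    ← integral_trim hm hψ]

lemma condExp_ind_inter_ae_eq_of_indep [IsFiniteMeasure μ] (hm : m ≤ mΩ) (hm₁ : m₁ ≤ mΩ)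
    (hind : Indep m₁ m μ) (hE : MeasurableSet[m₁] E) (hE0 : μ E ≠ 0) {C : Set Ω}
    (hC : MeasurableSet C) :
    μ[ind (E ∩ C)|m] =ᵐ[μ] fun ω => μ.real E * (μ[|E])[ind C|m] ω := by
  set ν := μ[|E]
  have : IsProbabilityMeasure ν := cond_isProbabilityMeasure hE0
  set p := ν[ind C|m]
  have hp_sm : StronglyMeasurable[m] p := stronglyMeasurable_condExp
  have hp_int : Integrable p μ := integrable_of_integrable_trim hm <| by
    rw [← trim_cond_eq_trim_of_indep hm hm₁ hind hE hE0]
    exact integrable_condExp.trim hm hp_sm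
  refine (ae_eq_condExp_of_forall_setIntegral_eq hm (integrable_ind μ ((hm₁ _ hE).inter hC))
    (fun A _ _ => (hp_int.const_mul _).integrableOn) (fun A hAm _ => ?_)
    (hp_sm.const_mul _).aestronglyMeasurable).symm
  have hA : MeasurableSet A := hm A hAm
  have hμE : μ.real E ≠ 0 := (measureReal_ne_zero_iff (measure_ne_top μ E)).2 hE0
  calc ∫ ω in A, μ.real E * p ω ∂μ = μ.real E * ∫ ω, ind A ω * p ω ∂ν := by
        rw [integral_const_mul, ← integral_ind_mul μ hA,
          integral_cond_eq_integral_of_indep hm hm₁ hind hE hE0 (ψ := fun ω => ind A ω * p ω)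
            ((measurable_ind hAm).stronglyMeasurable.mul hp_sm)]
    _ = μ.real E * ν.real (A ∩ C) := by
        rw [integral_ind_mul ν hA, setIntegral_condExp hm (integrable_ind ν hC) hAm,
          ← integral_ind_mul ν hA]
        simp_rw [ind_mul_ind, integral_ind ν (hA.inter hC)]
    _ = ∫ ω in A, ind (E ∩ C) ω ∂μ := by
        rw [cond_real_apply_eq_div (hm₁ _ hE), mul_div_cancel₀ _ hμE,
          ← integral_ind_mul μ hA]
        simp_rw [ind_mul_ind, integral_ind μ (hA.inter ((hm₁ _ hE).inter hC))]
        congr 1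
        ext; simp only [mem_inter_iff]; tauto

lemma integrable_mul_condExp_cond_of_indep [IsFiniteMeasure μ] (hm : m ≤ mΩ)
    (hm₁ : m₁ ≤ mΩ) (hind : Indep m₁ m μ) (hE : MeasurableSet[m₁] E) (hE0 : μ E ≠ 0)
    {C : Set Ω} (hC : MeasurableSet C) {X : Ω → ℝ} (hXi : Integrable X μ) :
    Integrable (fun ω => X ω * (μ[|E])[ind C|m] ω) μ := by
  have hμE : μ.real E ≠ 0 := (measureReal_ne_zero_iff (measure_ne_top μ E)).2 hE0
  refine ((hXi.mul_bdd (stronglyMeasurable_condExp.mono hm).aestronglyMeasurable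
    (ae_norm_condExp_ind_le_one hm ((hm₁ _ hE).inter hC))).const_mul (μ.real E)⁻¹).congr ?_
  filter_upwards [condExp_ind_inter_ae_eq_of_indep hm hm₁ hind hE hE0 hC] with ω hω
  rw [hω, mul_left_comm, inv_mul_cancel_left₀ hμE]

end Independence

section ConditionalIndependence

variable {Ω β : Type*} {m₁ m mΩ : MeasurableSpace Ω} [StandardBorelSpace Ω] {μ : Measure Ω}
  [IsFiniteMeasure μ] [MeasurableSpace β] {E C : Set Ω}

/-- `1_B - μ⟦B | m⟧` is orthogonal to every indicator of `σ(X)` by the product rule for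
conditional probabilities, hence to `X`. -/
theorem ProbabilityTheory.CondIndepFun.integral_ind_preimage_mul (hm : m ≤ mΩ) {X : Ω → ℝ}
    {Z : Ω → β} (hXZ : CondIndepFun m hm X Z μ) (hX : Measurable X) (hXi : Integrable X μ)
    (hZ : Measurable Z) {T : Set β} (hT : MeasurableSet T) :
    ∫ ω, ind (Z ⁻¹' T) ω * X ω ∂μ = ∫ ω, μ[ind (Z ⁻¹' T)|m] ω * X ω ∂μ := by
  set B := Z ⁻¹' T
  set q := μ[ind B|m]
  have hB : MeasurableSet B := hZ hT
  have hq_sm : StronglyMeasurable[m] q := stronglyMeasurable_condExp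
  have hq_mul : ∀ {f : Ω → ℝ}, Integrable f μ → Integrable (fun ω => q ω * f ω) μ :=
    fun hf => hf.bdd_mul (hq_sm.mono hm).aestronglyMeasurable (ae_norm_condExp_ind_le_one hm hB)
  have hBX : Integrable (fun ω => ind B ω * X ω) μ := hXi.ind_mul hB
  have hqX : Integrable (fun ω => q ω * X ω) μ := hq_mul hXi
  suffices ∫ ω, X ω * (ind B ω - q ω) ∂μ = 0 by
    rw [← sub_eq_zero, ← integral_sub hBX hqX, ← this]
    congr 1 with ω
    ring
  refine integral_mul_eq_zero_of_setIntegral_preimage_eq_zero hX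
    ((integrable_ind μ hB).sub integrable_condExp) ((hBX.sub hqX).congr (ae_of_all _ fun ω => by
      simp only [Pi.sub_apply]; ring)) fun t ht => ?_
  have hA : MeasurableSet (X ⁻¹' t) := hX ht
  rw [integral_sub (integrable_ind μ hB).integrableOn integrable_condExp.integrableOn, sub_eq_zero]
  calc ∫ ω in X ⁻¹' t, ind B ω ∂μ = ∫ ω, μ[ind (X ⁻¹' t ∩ B)|m] ω ∂μ := by
        simp_rw [integral_condExp hm, ← ind_mul_ind, integral_ind_mul μ hA]
    _ = ∫ ω, q ω * μ[ind (X ⁻¹' t)|m] ω ∂μ := integral_congr_ae <|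
        ((condIndepFun_iff_condExp_inter_preimage_eq_mul hX hZ).1 hXZ t T ht hT).mono
          fun ω hω => hω.trans (mul_comm _ _)
    _ = ∫ ω, q ω * ind (X ⁻¹' t) ω ∂μ :=
        integral_mul_condExp_of_stronglyMeasurable hm hq_sm (hq_mul (integrable_ind μ hA))
          (integrable_ind μ hA)
    _ = ∫ ω in X ⁻¹' t, q ω ∂μ := by
        simp_rw [mul_comm (q _), integral_ind_mul μ hA]

theorem integral_cond_ind_mul_eq_integral_mul_condExp (hm : m ≤ mΩ) (hm₁ : m₁ ≤ mΩ)
    (hind : Indep m₁ m μ) (hE : MeasurableSet[m₁] E) (hE0 : μ E ≠ 0) (hC : MeasurableSet C)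
    {Z : Ω → β} (hZ : Measurable Z) {T : Set β} (hT : MeasurableSet T)
    (hZT : Z ⁻¹' T = E ∩ C) {X : Ω → ℝ} (hXZ : CondIndepFun m hm X Z μ) (hX : Measurable X)
    (hXi : Integrable X μ) :
    ∫ ω, ind C ω * X ω ∂μ[|E] = ∫ ω, X ω * (μ[|E])[ind C|m] ω ∂μ := by
  have hμE : μ.real E ≠ 0 := (measureReal_ne_zero_iff (measure_ne_top μ E)).2 hE0
  calc ∫ ω, ind C ω * X ω ∂μ[|E]
    _ = (μ.real E)⁻¹ * ∫ ω, ind (E ∩ C) ω * X ω ∂μ := by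
        simp_rw [integral_cond_eq_inv_mul_integral_ind_mul (hm₁ _ hE), ← mul_assoc, ind_mul_ind]
    _ = (μ.real E)⁻¹ * ∫ ω, μ[ind (E ∩ C)|m] ω * X ω ∂μ := by
        rw [← hZT, hXZ.integral_ind_preimage_mul hm hX hXi hZ hT]
    _ = (μ.real E)⁻¹ * ∫ ω, μ.real E * (X ω * (μ[|E])[ind C|m] ω) ∂μ := by
        refine congrArg _ (integral_congr_ae ?_)
        filter_upwards [condExp_ind_inter_ae_eq_of_indep hm hm₁ hind hE hE0 hC] with ω hω
        rw [hω]
        ring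
    _ = ∫ ω, X ω * (μ[|E])[ind C|m] ω ∂μ := by
        rw [integral_const_mul, inv_mul_cancel_left₀ hμE]

theorem integral_cond_ind_mul_sub_eq_integral_sub_mul_condExp (hm : m ≤ mΩ)
    (hm₁ : m₁ ≤ mΩ) (hind : Indep m₁ m μ) (hE : MeasurableSet[m₁] E) (hE0 : μ E ≠ 0)
    (hC : MeasurableSet C) {Z : Ω → β} (hZ : Measurable Z) {T : Set β} (hT : MeasurableSet T)
    (hZT : Z ⁻¹' T = E ∩ C) {X₁ X₀ : Ω → ℝ} (hXZ₁ : CondIndepFun m hm X₁ Z μ)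
    (hXZ₀ : CondIndepFun m hm X₀ Z μ) (hX₁ : Measurable X₁) (hX₀ : Measurable X₀)
    (hXi₁ : Integrable X₁ μ) (hXi₀ : Integrable X₀ μ) :
    ∫ ω, ind C ω * (X₁ ω - X₀ ω) ∂μ[|E]
      = ∫ ω, (X₁ ω - X₀ ω) * (μ[|E])[ind C|m] ω ∂μ := by
  simp_rw [mul_sub, sub_mul]
  rw [integral_sub ((hXi₁.cond hE0).ind_mul hC) ((hXi₀.cond hE0).ind_mul hC),
    integral_sub (integrable_mul_condExp_cond_of_indep hm hm₁ hind hE hE0 hC hXi₁)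
      (integrable_mul_condExp_cond_of_indep hm hm₁ hind hE hE0 hC hXi₀),
    integral_cond_ind_mul_eq_integral_mul_condExp hm hm₁ hind hE hE0 hC hZ hT hZT hXZ₁ hX₁
      hXi₁,
    integral_cond_ind_mul_eq_integral_mul_condExp hm hm₁ hind hE hE0 hC hZ hT hZT hXZ₀ hX₀
      hXi₀]

end ConditionalIndependence

theorem transport_identity_general
    {Ω : Type*} [mΩ : MeasurableSpace Ω] [StandardBorelSpace Ω]
    (μ : Measure Ω) [IsProbabilityMeasure μ]
    (gmax : ℕ)
    (S G : Ω → ℕ)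
    (hSmeas : Measurable S)
    (hSpos : ∀ s, (s = 1 ∨ s = 2) → 0 < μ {ω | S ω = s})
    (hGmeas : Measurable G)
    (Ypo : ℕ → ℕ → Ω → ℝ)
    (hYpomeas : ∀ a ≤ 1, ∀ g ≤ gmax, Measurable (Ypo a g))
    (hYposq : ∀ a ≤ 1, ∀ g ≤ gmax, MemLp (Ypo a g) 2 μ)
    (Ya : ℕ → Ω → ℝ)
    (hYa : ∀ a ω, Ya a ω = ∑ g ∈ Finset.range (gmax + 1), ind {ω' | G ω' = g} ω * Ypo a g ω)
    (mH : MeasurableSpace Ω) (hH : mH ≤ mΩ)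
    (pg : ℕ → ℕ → Ω → ℝ)
    (hpg : ∀ s g, pg s g = (μ[|{ω | S ω = s}])[ind {ω | G ω = g} | mH])
    (htrans : ∀ a ≤ 1, ∀ g ≤ gmax,
      CondIndepFun mH hH (Ypo a g) (fun ω => (S ω, G ω)) μ)
    (hSH : Indep (MeasurableSpace.comap S inferInstance) mH μ) :
    ∀ s, (s = 1 ∨ s = 2) →
      (∫ ω, (Ya 1 ω - Ya 0 ω) ∂(μ[|{ω | S ω = s}])
        = ∑ g ∈ Finset.range (gmax + 1),
            ∫ ω, (Ypo 1 g ω - Ypo 0 g ω) * pg s g ω ∂μ)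
      ∧ ∫ ω, (Ya 1 ω - Ya 0 ω) ∂(μ[|{ω | S ω = s}])
        = (∑ g ∈ Finset.range (gmax + 1),
              cov μ (fun ω => Ypo 1 g ω - Ypo 0 g ω) (pg s g))
          + ∑ g ∈ Finset.range (gmax + 1),
              (∫ ω, (Ypo 1 g ω - Ypo 0 g ω) ∂μ)
                * ((μ[|{ω | S ω = s}]) {ω | G ω = g}).toReal := by
  intro s hs
  set E := {ω | S ω = s}
  have hE : MeasurableSet[MeasurableSpace.comap S inferInstance] E :=
    ⟨{s}, measurableSet_singleton s, rfl⟩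
  have hE0 : μ E ≠ 0 := (hSpos s hs).ne'
  have hC (g : ℕ) : MeasurableSet[mΩ] {ω | G ω = g} := hGmeas (measurableSet_singleton g)
  have hYi (a : ℕ) (ha : a ≤ 1) (g : ℕ) (hg : g ≤ gmax) : Integrable (Ypo a g) μ :=
    (hYposq a ha g hg).integrable one_le_two
  have hτ (g : ℕ) (hg : g ≤ gmax) :
      ∫ ω, ind {ω | G ω = g} ω * (Ypo 1 g ω - Ypo 0 g ω) ∂μ[|E]
        = ∫ ω, (Ypo 1 g ω - Ypo 0 g ω) * pg s g ω ∂μ := by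
    rw [hpg s g]
    exact integral_cond_ind_mul_sub_eq_integral_sub_mul_condExp hH hSmeas.comap_le hSH hE hE0
      (hC g) (hSmeas.prodMk hGmeas) (measurableSet_singleton (s, g))
      (by ext; simp [E, Prod.ext_iff]) (htrans 1 le_rfl g hg) (htrans 0 zero_le_one g hg)
      (hYpomeas 1 le_rfl g hg) (hYpomeas 0 zero_le_one g hg) (hYi 1 le_rfl g hg)
      (hYi 0 zero_le_one g hg)
  have hφ : ∫ ω, (Ya 1 ω - Ya 0 ω) ∂μ[|E]
      = ∑ g ∈ Finset.range (gmax + 1), ∫ ω, (Ypo 1 g ω - Ypo 0 g ω) * pg s g ω ∂μ := by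
    simp_rw [hYa, ← Finset.sum_sub_distrib, ← mul_sub]
    rw [integral_finsetSum _ fun g hg => ?_]
    · exact Finset.sum_congr rfl fun g hg => hτ g (Nat.lt_succ_iff.1 (Finset.mem_range.1 hg))
    have hg := Nat.lt_succ_iff.1 (Finset.mem_range.1 hg)
    exact (((hYi 1 le_rfl g hg).sub (hYi 0 zero_le_one g hg)).cond hE0).ind_mul (hC g)
  refine ⟨hφ, ?_⟩
  rw [hφ, ← Finset.sum_add_distrib]
  refine Finset.sum_congr rfl fun g _ => ?_
  have : IsProbabilityMeasure μ[|E] := cond_isProbabilityMeasure hE0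
  have hpg_mean : ∫ ω, pg s g ω ∂μ = (μ[|E] {ω | G ω = g}).toReal := by
    rw [hpg s g, ← integral_cond_eq_integral_of_indep hH hSmeas.comap_le hSH hE hE0
      stronglyMeasurable_condExp, integral_condExp hH, integral_ind _ (hC g), measureReal_def]
  rw [cov, hpg_mean]
  ring

/-- **Transport identity (key step in the proof of Theorem 2).**  Under the transportability
assumptions (`Y^(a,g) ⟂ (S,G) | 𝓗` and `S ⟂ 𝓗`), for `s ∈ {1,2}`,
`E[Y^(1) − Y^(0) | S=s] = Σ_g E[τ(g) · P(G=g|S=s,𝓗)]` (outer expectation unconditional),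
and consequently
`φ_s = Σ_g Cov(τ(g), P(G=g|S=s,𝓗)) + Σ_g E[τ(g)] · P(G=g|S=s)`,
where `τ(g) = Y^(1,g) − Y^(0,g)` is the controlled individual main effect. -/
theorem transport_identity
    {Ω : Type*} [mΩ : MeasurableSpace Ω] [StandardBorelSpace Ω] [Nonempty Ω]
    (μ : Measure Ω) [IsProbabilityMeasure μ]
    (gmax : ℕ)
    (S A G : Ω → ℕ)
    (hS : ∀ ω, S ω = 1 ∨ S ω = 2) (hSmeas : Measurable S)
    (hSpos : ∀ s, (s = 1 ∨ s = 2) → 0 < μ {ω | S ω = s})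
    (hA : ∀ ω, A ω ≤ 1) (hG : ∀ ω, G ω ≤ gmax)
    (hAmeas : Measurable A) (hGmeas : Measurable G)
    (Ypo : ℕ → ℕ → Ω → ℝ)
    (hYpomeas : ∀ a ≤ 1, ∀ g ≤ gmax, Measurable (Ypo a g))
    (hYposq : ∀ a ≤ 1, ∀ g ≤ gmax, MemLp (Ypo a g) 2 μ)
    (Ya : ℕ → Ω → ℝ)
    (hYa : ∀ a ω, Ya a ω = ∑ g ∈ Finset.range (gmax + 1), ind {ω' | G ω' = g} ω * Ypo a g ω)
    (Y : Ω → ℝ)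
    (hY : ∀ ω, Y ω = ind {ω' | A ω' = 1} ω * Ya 1 ω + ind {ω' | A ω' = 0} ω * Ya 0 ω)
    (mH : MeasurableSpace Ω) (hH : mH ≤ mΩ)
    (pg : ℕ → ℕ → Ω → ℝ)
    (hpg : ∀ s g, pg s g = (μ[|{ω | S ω = s}])[ind {ω | G ω = g} | mH])
    (hpgbdd : ∀ s g, ∀ᵐ ω ∂μ, 0 ≤ pg s g ω ∧ pg s g ω ≤ 1)
    (hpgmeas : ∀ s g, Measurable[mH] (pg s g))
    (htrans : ∀ a ≤ 1, ∀ g ≤ gmax,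
      CondIndepFun mH hH (Ypo a g) (fun ω => (S ω, G ω)) μ)
    (hSH : Indep (MeasurableSpace.comap S inferInstance) mH μ) :
    ∀ s, (s = 1 ∨ s = 2) →
      (∫ ω, (Ya 1 ω - Ya 0 ω) ∂(μ[|{ω | S ω = s}])
        = ∑ g ∈ Finset.range (gmax + 1),
            ∫ ω, (Ypo 1 g ω - Ypo 0 g ω) * pg s g ω ∂μ)
      ∧ ∫ ω, (Ya 1 ω - Ya 0 ω) ∂(μ[|{ω | S ω = s}])
        = (∑ g ∈ Finset.range (gmax + 1),
              cov μ (fun ω => Ypo 1 g ω - Ypo 0 g ω) (pg s g))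
          + ∑ g ∈ Finset.range (gmax + 1),
              (∫ ω, (Ypo 1 g ω - Ypo 0 g ω) ∂μ)
                * ((μ[|{ω | S ω = s}]) {ω | G ω = g}).toReal :=
  transport_identity_general (mΩ := mΩ) μ gmax S G hSmeas hSpos hGmeas Ypo hYpomeas hYposq Ya hYa mH
    hH pg hpg htrans hSH
end

section
/- Additive outcome model kills the transport bias (Proposition 2): suppose additionally that Y^(a,g) = W₀ + W₁(a) + W₂(g) + ε_{a,g} for all a ∈ {0,1} and g ∈ {0,…,g_max}, where W₀, W₁(0), W₁(1), W₂(0), …, W₂(g_max) are square-integrable random variables measurable with respect to a σ-algebra 𝓒 of covariate information with 𝓗 ⊆ 𝓒, and each noise term ε_{a,g} has mean zero and zero covariance with every bounded 𝓒-measurable random variable. Then φ₁ = φ₂ (equivalently T₃ = 0, so the bias of the naive estimator for φ₂ equals its bias for φ₁). -/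
open MeasureTheory ProbabilityTheory Set

/-!
Conditional independence of `Y^(a,g)` and `(S, G)` given `𝓗` means that on a stratum
`{S = s, G = g}` the outcome `Y^(a,g)` may be replaced by `E[Y^(a,g) | 𝓗]` under the integral.
In the additive model the noise is orthogonal to `𝓗`, so
`E[Y^(1,g) - Y^(0,g) | 𝓗] = E[W₁(1) - W₁(0) | 𝓗]` no longer depends on `g`. Summing over the
strata of population `s` and using that `S` is independent of `𝓗` gives
`E[(Y^(1) - Y^(0)) 1{S = s}] = P(S = s) E[W₁(1) - W₁(0)]`, so `φ₁ = φ₂ = E[W₁(1) - W₁(0)]`.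
-/

lemma abs_indicator_one_le_one {Ω : Type*} (s : Set Ω) (ω : Ω) :
    |s.indicator (fun _ => (1 : ℝ)) ω| ≤ 1 := by
  by_cases h : ω ∈ s <;> simp [h]

lemma integral_cond_eq_inv_mul_setIntegral {Ω : Type*} [MeasurableSpace Ω] (μ : Measure Ω)
    (s : Set Ω) (f : Ω → ℝ) :
    ∫ ω, f ω ∂μ[|s] = (μ.real s)⁻¹ * ∫ ω in s, f ω ∂μ := by
  rw [ProbabilityTheory.cond, integral_smul_measure, ENNReal.toReal_inv, smul_eq_mul,
    measureReal_def]

section CondExp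

variable {Ω : Type*} {m : MeasurableSpace Ω} [mΩ : MeasurableSpace Ω] {μ : Measure Ω}
  {s : Set Ω} {f : Ω → ℝ}

lemma setIntegral_eq_integral_indicator_one_mul (hs : MeasurableSet s) :
    ∫ ω in s, f ω ∂μ = ∫ ω, s.indicator (fun _ => (1 : ℝ)) ω * f ω ∂μ := by
  simp_rw [← indicator_mul_left, one_mul]
  exact (integral_indicator hs).symm

lemma MeasureTheory.Integrable.indicator_one_mul (hf : Integrable f μ) (hs : MeasurableSet s) :
    Integrable (fun ω => s.indicator (fun _ => (1 : ℝ)) ω * f ω) μ :=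
  hf.bdd_mul (measurable_const.indicator hs).aestronglyMeasurable
    (ae_of_all _ (abs_indicator_one_le_one s))

lemma MeasureTheory.Integrable.condExp_indicator_mul [IsFiniteMeasure μ] (hf : Integrable f μ) :
    Integrable (fun ω => (μ⟦s | m⟧) ω * f ω) μ :=
  hf.bdd_mul integrable_condExp.aestronglyMeasurable
    (ae_bdd_abs_condExp_of_ae_bdd_abs (ae_of_all _ (abs_indicator_one_le_one s)))

lemma integral_condExp_mul_of_stronglyMeasurable (hm : m ≤ mΩ) [IsFiniteMeasure μ] {g : Ω → ℝ}
    (hg : StronglyMeasurable[m] g) (hfg : Integrable (f * g) μ) (hf : Integrable f μ) :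
    ∫ ω, μ[f | m] ω * g ω ∂μ = ∫ ω, f ω * g ω ∂μ :=
  calc ∫ ω, μ[f | m] ω * g ω ∂μ = ∫ ω, μ[f * g | m] ω ∂μ :=
        integral_congr_ae (condExp_mul_of_stronglyMeasurable_right hg hfg hf).symm
    _ = ∫ ω, f ω * g ω ∂μ := integral_condExp hm

lemma condExp_ae_eq_zero_of_forall_cov_eq_zero [IsFiniteMeasure μ] (hm : m ≤ mΩ) {ε : Ω → ℝ}
    (hε : Integrable ε μ) (hmean : ∫ ω, ε ω ∂μ = 0)
    (hcov : ∀ h : Ω → ℝ, Measurable[m] h → (∃ c : ℝ, ∀ ω, |h ω| ≤ c) → cov μ ε h = 0) :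
    μ[ε | m] =ᵐ[μ] 0 := by
  refine (ae_eq_condExp_of_forall_setIntegral_eq hm hε (fun _ _ _ => integrableOn_zero)
    (fun u hu _ => ?_) aestronglyMeasurable_const).symm
  have hu_cov := hcov _ (measurable_const.indicator hu) ⟨1, abs_indicator_one_le_one u⟩
  rw [cov, hmean, zero_mul, sub_zero] at hu_cov
  simp_rw [mul_comm (ε _)] at hu_cov
  rw [integral_zero, setIntegral_eq_integral_indicator_one_mul (hm u hu), hu_cov]

lemma condExp_sub_ae_eq_of_additive_model [IsFiniteMeasure μ] (hm : m ≤ mΩ)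
    {Y₁ Y₀ W₀ U₁ U₀ W₂ ε₁ ε₀ : Ω → ℝ} (hY₁ : Integrable Y₁ μ) (hY₀ : Integrable Y₀ μ)
    (hW₀ : Integrable W₀ μ) (hU₁ : Integrable U₁ μ) (hU₀ : Integrable U₀ μ)
    (hW₂ : Integrable W₂ μ) (h₁ : ∀ ω, Y₁ ω = W₀ ω + U₁ ω + W₂ ω + ε₁ ω)
    (h₀ : ∀ ω, Y₀ ω = W₀ ω + U₀ ω + W₂ ω + ε₀ ω)
    (hmean₁ : ∫ ω, ε₁ ω ∂μ = 0) (hmean₀ : ∫ ω, ε₀ ω ∂μ = 0)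
    (hcov₁ : ∀ h : Ω → ℝ, Measurable[m] h → (∃ c : ℝ, ∀ ω, |h ω| ≤ c) → cov μ ε₁ h = 0)
    (hcov₀ : ∀ h : Ω → ℝ, Measurable[m] h → (∃ c : ℝ, ∀ ω, |h ω| ≤ c) → cov μ ε₀ h = 0) :
    μ[Y₁ | m] - μ[Y₀ | m] =ᵐ[μ] μ[U₁ - U₀ | m] := by
  have hε₁ : Integrable ε₁ μ := (((hY₁.sub hW₀).sub hU₁).sub hW₂).congr
    (ae_of_all _ fun ω => by simp only [Pi.sub_apply, h₁ ω]; ring)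
  have hε₀ : Integrable ε₀ μ := (((hY₀.sub hW₀).sub hU₀).sub hW₂).congr
    (ae_of_all _ fun ω => by simp only [Pi.sub_apply, h₀ ω]; ring)
  have hsplit : Y₁ - Y₀ = (U₁ - U₀) + (ε₁ - ε₀) := funext fun ω => by
    simp only [Pi.sub_apply, Pi.add_apply, h₁ ω, h₀ ω]; ring
  filter_upwards [(condExp_sub hY₁ hY₀ m).symm, condExp_add (hU₁.sub hU₀) (hε₁.sub hε₀) m,
    condExp_sub hε₁ hε₀ m, condExp_ae_eq_zero_of_forall_cov_eq_zero hm hε₁ hmean₁ hcov₁,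
    condExp_ae_eq_zero_of_forall_cov_eq_zero hm hε₀ hmean₀ hcov₀] with ω hY hUε hε h₁ h₀
  simp only [Pi.sub_apply, Pi.add_apply, Pi.zero_apply] at hY hUε hε h₁ h₀ ⊢
  rw [hY, hsplit, hUε, hε, h₁, h₀, sub_zero, add_zero]

end CondExp

section CondIndep

variable {Ω β γ : Type*} {m : MeasurableSpace Ω} [mΩ : MeasurableSpace Ω] [StandardBorelSpace Ω]
  [MeasurableSpace β] [MeasurableSpace γ] {μ : Measure Ω} [IsFiniteMeasure μ] {hm : m ≤ mΩ}
  {Z : Ω → γ} {t : Set γ}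

lemma ProbabilityTheory.CondIndepFun.setIntegral_preimage_condExp_indicator {X : Ω → β}
    {s : Set β} (h : CondIndepFun m hm X Z μ) (hX : Measurable X) (hZ : Measurable Z)
    (hs : MeasurableSet s) (ht : MeasurableSet t) :
    ∫ ω in X ⁻¹' s, (μ⟦Z ⁻¹' t | m⟧) ω ∂μ
      = ∫ ω in X ⁻¹' s, (Z ⁻¹' t).indicator (fun _ => (1 : ℝ)) ω ∂μ := by
  have hA := hX hs
  have hfactor := (condIndepFun_iff_condExp_inter_preimage_eq_mul hX hZ).1 h s t hs ht
  calc ∫ ω in X ⁻¹' s, (μ⟦Z ⁻¹' t | m⟧) ω ∂μ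
      = ∫ ω, (X ⁻¹' s).indicator (fun _ => (1 : ℝ)) ω * (μ⟦Z ⁻¹' t | m⟧) ω ∂μ :=
        setIntegral_eq_integral_indicator_one_mul hA
    _ = ∫ ω, (μ⟦X ⁻¹' s | m⟧) ω * (μ⟦Z ⁻¹' t | m⟧) ω ∂μ :=
        (integral_condExp_mul_of_stronglyMeasurable hm stronglyMeasurable_condExp
          (integrable_condExp.indicator_one_mul hA) ((integrable_const 1).indicator hA)).symm
    _ = ∫ ω, (μ⟦X ⁻¹' s ∩ Z ⁻¹' t | m⟧) ω ∂μ := integral_congr_ae hfactor.symm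
    _ = ∫ ω, (X ⁻¹' s).indicator (fun _ => (1 : ℝ)) ω * (Z ⁻¹' t).indicator (fun _ => 1) ω ∂μ := by
        rw [integral_condExp hm]
        simp_rw [← indicator_mul_left, one_mul, indicator_indicator]
    _ = ∫ ω in X ⁻¹' s, (Z ⁻¹' t).indicator (fun _ => (1 : ℝ)) ω ∂μ :=
        (setIntegral_eq_integral_indicator_one_mul hA).symm

/-- By the previous lemma, `1_{Z ∈ t}` and `μ⟦Z ⁻¹' t | m⟧` have equal integrals over the sets of
`σ(f)`, hence equal conditional expectations given `σ(f)`, which is all that `f` sees of them. -/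
lemma ProbabilityTheory.CondIndepFun.setIntegral_preimage_eq_integral_condExp_indicator_mul
    {f : Ω → ℝ} (h : CondIndepFun m hm f Z μ) (hf : Measurable f) (hfi : Integrable f μ)
    (hZ : Measurable Z) (ht : MeasurableSet t) :
    ∫ ω in Z ⁻¹' t, f ω ∂μ = ∫ ω, (μ⟦Z ⁻¹' t | m⟧) ω * f ω ∂μ := by
  have hB := hZ ht
  have hmf : MeasurableSpace.comap f inferInstance ≤ mΩ := hf.comap_le
  have hf_mf : StronglyMeasurable[MeasurableSpace.comap f inferInstance] f :=
    (comap_measurable f).stronglyMeasurable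
  have hproj : μ[(Z ⁻¹' t).indicator (fun _ => (1 : ℝ)) | MeasurableSpace.comap f inferInstance]
      =ᵐ[μ] μ[μ⟦Z ⁻¹' t | m⟧ | MeasurableSpace.comap f inferInstance] := by
    refine ae_eq_condExp_of_forall_setIntegral_eq hmf integrable_condExp
      (fun _ _ _ => integrable_condExp.integrableOn) ?_
      stronglyMeasurable_condExp.aestronglyMeasurable
    rintro _ ⟨s, hs, rfl⟩ -
    rw [setIntegral_condExp hmf ((integrable_const 1).indicator hB) ⟨s, hs, rfl⟩,
      h.setIntegral_preimage_condExp_indicator hf hZ hs ht]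
  calc ∫ ω in Z ⁻¹' t, f ω ∂μ
      = ∫ ω, (Z ⁻¹' t).indicator (fun _ => (1 : ℝ)) ω * f ω ∂μ :=
        setIntegral_eq_integral_indicator_one_mul hB
    _ = ∫ ω, μ[(Z ⁻¹' t).indicator (fun _ => (1 : ℝ)) | MeasurableSpace.comap f inferInstance] ω
          * f ω ∂μ :=
        (integral_condExp_mul_of_stronglyMeasurable hmf hf_mf (hfi.indicator_one_mul hB)
          ((integrable_const 1).indicator hB)).symm
    _ = ∫ ω, μ[μ⟦Z ⁻¹' t | m⟧ | MeasurableSpace.comap f inferInstance] ω * f ω ∂μ :=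
        integral_congr_ae (hproj.mono fun ω hω => congrArg (· * f ω) hω)
    _ = ∫ ω, (μ⟦Z ⁻¹' t | m⟧) ω * f ω ∂μ :=
        integral_condExp_mul_of_stronglyMeasurable hmf hf_mf hfi.condExp_indicator_mul
          integrable_condExp

lemma ProbabilityTheory.CondIndepFun.setIntegral_preimage_condExp {f : Ω → ℝ}
    (h : CondIndepFun m hm f Z μ) (hf : Measurable f) (hfi : Integrable f μ)
    (hZ : Measurable Z) (ht : MeasurableSet t) :
    ∫ ω in Z ⁻¹' t, μ[f | m] ω ∂μ = ∫ ω in Z ⁻¹' t, f ω ∂μ := by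
  have hB := hZ ht
  calc ∫ ω in Z ⁻¹' t, μ[f | m] ω ∂μ
      = ∫ ω, (Z ⁻¹' t).indicator (fun _ => (1 : ℝ)) ω * μ[f | m] ω ∂μ :=
        setIntegral_eq_integral_indicator_one_mul hB
    _ = ∫ ω, (μ⟦Z ⁻¹' t | m⟧) ω * μ[f | m] ω ∂μ :=
        (integral_condExp_mul_of_stronglyMeasurable hm stronglyMeasurable_condExp
          (integrable_condExp.indicator_one_mul hB) ((integrable_const 1).indicator hB)).symm
    _ = ∫ ω, μ[f | m] ω * (μ⟦Z ⁻¹' t | m⟧) ω ∂μ := by simp_rw [mul_comm]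
    _ = ∫ ω, f ω * (μ⟦Z ⁻¹' t | m⟧) ω ∂μ :=
        integral_condExp_mul_of_stronglyMeasurable hm stronglyMeasurable_condExp
          (by rw [mul_comm]; exact hfi.condExp_indicator_mul) hfi
    _ = ∫ ω in Z ⁻¹' t, f ω ∂μ := by
        simp_rw [mul_comm (f _)]
        exact (h.setIntegral_preimage_eq_integral_condExp_indicator_mul hf hfi hZ ht).symm

lemma setIntegral_preimage_sub_eq_of_condIndepFun {Y₁ Y₀ D : Ω → ℝ}
    (h₁ : CondIndepFun m hm Y₁ Z μ) (h₀ : CondIndepFun m hm Y₀ Z μ)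
    (hY₁ : Measurable Y₁) (hY₀ : Measurable Y₀) (hY₁i : Integrable Y₁ μ) (hY₀i : Integrable Y₀ μ)
    (hZ : Measurable Z) (ht : MeasurableSet t) (hD : μ[Y₁ | m] - μ[Y₀ | m] =ᵐ[μ] D) :
    ∫ ω in Z ⁻¹' t, (Y₁ ω - Y₀ ω) ∂μ = ∫ ω in Z ⁻¹' t, D ω ∂μ := by
  rw [integral_sub hY₁i.integrableOn hY₀i.integrableOn,
    ← h₁.setIntegral_preimage_condExp hY₁ hY₁i hZ ht,
    ← h₀.setIntegral_preimage_condExp hY₀ hY₀i hZ ht,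
    ← integral_sub integrable_condExp.integrableOn integrable_condExp.integrableOn]
  exact setIntegral_congr_ae (hZ ht) (hD.mono fun ω hω _ => hω)

end CondIndep

lemma sum_ind_setOf_eq_mul {Ω ι : Type*} [DecidableEq ι] {G : Ω → ι} {t : Finset ι} {ω : Ω}
    (hω : G ω ∈ t) (F : ι → Ω → ℝ) :
    ∑ g ∈ t, ind {ω' | G ω' = g} ω * F g ω = F (G ω) ω := by
  rw [Finset.sum_eq_single_of_mem (G ω) hω fun g _ hg => by simp [ind, Ne.symm hg]]
  simp [ind]

lemma setIntegral_eq_sum_setIntegral_inter_preimage_singleton {Ω ι : Type*}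
    [MeasurableSpace Ω] [MeasurableSpace ι] [MeasurableSingletonClass ι] {μ : Measure Ω}
    {f : Ω → ℝ} {A : Set Ω} {G : Ω → ι} {t : Finset ι}
    (hA : MeasurableSet A) (hG : Measurable G) (hGt : ∀ ω, G ω ∈ t) (hf : IntegrableOn f A μ) :
    ∫ ω in A, f ω ∂μ = ∑ g ∈ t, ∫ ω in A ∩ G ⁻¹' {g}, f ω ∂μ := by
  have hcover : A = ⋃ g ∈ t, A ∩ G ⁻¹' {g} := by
    ext ω; simpa using fun _ => hGt ω
  rw [← integral_biUnion_finset t (fun g _ => hA.inter (hG (measurableSet_singleton g)))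
    (fun g _ g' _ hgg' => ?_) (fun g _ => hf.mono_set inter_subset_left), ← hcover]
  exact (Disjoint.preimage G (disjoint_singleton.2 hgg')).inter_left' A |>.inter_right' A

section Indep

variable {Ω β : Type*} {m : MeasurableSpace Ω} [mΩ : MeasurableSpace Ω] [MeasurableSpace β]
  {μ : Measure Ω} [IsProbabilityMeasure μ] {S : Ω → β} {D : Ω → ℝ}

lemma setIntegral_preimage_eq_mul_integral_of_indep (hm : m ≤ mΩ) {t : Set β}
    (hS : Measurable S) (hind : Indep (MeasurableSpace.comap S inferInstance) m μ)
    (hD : StronglyMeasurable[m] D) (hDi : Integrable D μ) (ht : MeasurableSet t) :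
    ∫ ω in S ⁻¹' t, D ω ∂μ = μ.real (S ⁻¹' t) * ∫ ω, D ω ∂μ := by
  have hSt := hS ht
  have hconst : μ⟦S ⁻¹' t | m⟧ =ᵐ[μ] fun _ => μ.real (S ⁻¹' t) := by
    refine (condExp_indep_eq hS.comap_le hm ?_ hind).trans (ae_of_all _ fun _ => ?_)
    · exact stronglyMeasurable_const.indicator ⟨t, ht, rfl⟩
    · exact integral_indicator_one hSt
  calc ∫ ω in S ⁻¹' t, D ω ∂μ
      = ∫ ω, (S ⁻¹' t).indicator (fun _ => (1 : ℝ)) ω * D ω ∂μ :=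
        setIntegral_eq_integral_indicator_one_mul hSt
    _ = ∫ ω, (μ⟦S ⁻¹' t | m⟧) ω * D ω ∂μ :=
        (integral_condExp_mul_of_stronglyMeasurable hm hD (hDi.indicator_one_mul hSt)
          ((integrable_const 1).indicator hSt)).symm
    _ = ∫ ω, μ.real (S ⁻¹' t) * D ω ∂μ :=
        integral_congr_ae (hconst.mono fun ω hω => congrArg (· * D ω) hω)
    _ = μ.real (S ⁻¹' t) * ∫ ω, D ω ∂μ := integral_const_mul _ _

lemma setIntegral_preimage_eq_mul_integral_of_forall_fiber {ι : Type*} [MeasurableSpace ι]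
    [MeasurableSingletonClass ι] (hm : m ≤ mΩ) {G : Ω → ι} {t : Finset ι} {u : Set β}
    {f : Ω → ℝ} (hS : Measurable S) (hind : Indep (MeasurableSpace.comap S inferInstance) m μ)
    (hG : Measurable G) (hGt : ∀ ω, G ω ∈ t) (hu : MeasurableSet u) (hf : Integrable f μ)
    (hD : StronglyMeasurable[m] D) (hDi : Integrable D μ)
    (hfiber : ∀ g ∈ t, ∫ ω in S ⁻¹' u ∩ G ⁻¹' {g}, f ω ∂μ = ∫ ω in S ⁻¹' u ∩ G ⁻¹' {g}, D ω ∂μ) :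
    ∫ ω in S ⁻¹' u, f ω ∂μ = μ.real (S ⁻¹' u) * ∫ ω, D ω ∂μ := by
  have hSu := hS hu
  rw [setIntegral_eq_sum_setIntegral_inter_preimage_singleton hSu hG hGt hf.integrableOn,
    Finset.sum_congr rfl hfiber,
    ← setIntegral_eq_sum_setIntegral_inter_preimage_singleton hSu hG hGt hDi.integrableOn,
    setIntegral_preimage_eq_mul_integral_of_indep hm hS hind hD hDi hu]

end Indep

theorem additive_model_no_transport_bias_general
    {Ω : Type*} [mΩ : MeasurableSpace Ω] [StandardBorelSpace Ω]
    (μ : Measure Ω) [IsProbabilityMeasure μ]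
    (gmax : ℕ)
    (S G : Ω → ℕ)
    (hSmeas : Measurable S)
    (hSpos : ∀ s, (s = 1 ∨ s = 2) → 0 < μ {ω | S ω = s})
    (hG : ∀ ω, G ω ≤ gmax)
    (hGmeas : Measurable G)
    (Ypo : ℕ → ℕ → Ω → ℝ)
    (hYpomeas : ∀ a ≤ 1, ∀ g ≤ gmax, Measurable (Ypo a g))
    (hYposq : ∀ a ≤ 1, ∀ g ≤ gmax, MemLp (Ypo a g) 2 μ)
    (Ya : ℕ → Ω → ℝ)
    (hYa : ∀ a ω, Ya a ω = ∑ g ∈ Finset.range (gmax + 1), ind {ω' | G ω' = g} ω * Ypo a g ω)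
    (mH : MeasurableSpace Ω) (hH : mH ≤ mΩ)
    (htrans : ∀ a ≤ 1, ∀ g ≤ gmax,
      CondIndepFun mH hH (Ypo a g) (fun ω => (S ω, G ω)) μ)
    (hSH : Indep (MeasurableSpace.comap S inferInstance) mH μ)
    -- the additive outcome generating model
    (mC : MeasurableSpace Ω) (hHC : mH ≤ mC)
    (W0 : Ω → ℝ) (W1 W2 : ℕ → Ω → ℝ) (noise : ℕ → ℕ → Ω → ℝ)
    (hW0sq : MemLp W0 2 μ)
    (hW1sq : ∀ a ≤ 1, MemLp (W1 a) 2 μ)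
    (hW2sq : ∀ g ≤ gmax, MemLp (W2 g) 2 μ)
    (hmodel : ∀ a ≤ 1, ∀ g ≤ gmax, ∀ ω,
      Ypo a g ω = W0 ω + W1 a ω + W2 g ω + noise a g ω)
    (hnoise_mean : ∀ a ≤ 1, ∀ g ≤ gmax, ∫ ω, noise a g ω ∂μ = 0)
    (hnoise_uncorr : ∀ a ≤ 1, ∀ g ≤ gmax, ∀ h : Ω → ℝ, Measurable[mC] h →
      (∃ c : ℝ, ∀ ω, |h ω| ≤ c) → cov μ (noise a g) h = 0) :
    ∫ ω, (Ya 1 ω - Ya 0 ω) ∂(μ[|{ω | S ω = 1}])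
      = ∫ ω, (Ya 1 ω - Ya 0 ω) ∂(μ[|{ω | S ω = 2}]) := by
  -- `mH` and `mC` are instances as well; this makes `mΩ` the one found by default
  let _ : MeasurableSpace Ω := mΩ
  have hGmem : ∀ ω, G ω ∈ Finset.range (gmax + 1) := fun ω => Finset.mem_range_succ_iff.2 (hG ω)
  have hYint : ∀ a ≤ 1, ∀ g ≤ gmax, Integrable (Ypo a g) μ :=
    fun a ha g hg => (hYposq a ha g hg).integrable one_le_two
  have hW1int : ∀ a ≤ 1, Integrable (W1 a) μ := fun a ha => (hW1sq a ha).integrable one_le_two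
  have hD : ∀ g ≤ gmax, μ[Ypo 1 g | mH] - μ[Ypo 0 g | mH] =ᵐ[μ] μ[W1 1 - W1 0 | mH] :=
    fun g hg => condExp_sub_ae_eq_of_additive_model hH (hYint 1 le_rfl g hg)
      (hYint 0 zero_le_one g hg) (hW0sq.integrable one_le_two) (hW1int 1 le_rfl)
      (hW1int 0 zero_le_one) ((hW2sq g hg).integrable one_le_two) (hmodel 1 le_rfl g hg)
      (hmodel 0 zero_le_one g hg) (hnoise_mean 1 le_rfl g hg) (hnoise_mean 0 zero_le_one g hg)
      (fun h hh => hnoise_uncorr 1 le_rfl g hg h (hh.mono hHC le_rfl))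
      (fun h hh => hnoise_uncorr 0 zero_le_one g hg h (hh.mono hHC le_rfl))
  have hYa_fiber : ∀ a ω, Ya a ω = Ypo a (G ω) ω := fun a ω => by
    rw [hYa, sum_ind_setOf_eq_mul (hGmem ω)]
  have hYaint : ∀ a ≤ 1, Integrable (Ya a) μ := fun a ha => by
    rw [show Ya a = _ from funext (hYa a)]
    exact integrable_finsetSum _ fun g hg => (hYint a ha g (Finset.mem_range_succ_iff.1 hg))
      |>.indicator_one_mul (hGmeas (measurableSet_singleton g))
  have hstratum : ∀ s, ∀ g ∈ Finset.range (gmax + 1),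
      ∫ ω in S ⁻¹' {s} ∩ G ⁻¹' {g}, (Ya 1 ω - Ya 0 ω) ∂μ
        = ∫ ω in S ⁻¹' {s} ∩ G ⁻¹' {g}, μ[W1 1 - W1 0 | mH] ω ∂μ := by
    intro s g hg
    have hg' := Finset.mem_range_succ_iff.1 hg
    have hZ : Measurable fun ω => (S ω, G ω) := hSmeas.prodMk hGmeas
    have hst := (measurableSet_singleton s).prod (measurableSet_singleton g)
    rw [← mk_preimage_prod, ← setIntegral_preimage_sub_eq_of_condIndepFun (htrans 1 le_rfl g hg')
      (htrans 0 zero_le_one g hg') (hYpomeas 1 le_rfl g hg') (hYpomeas 0 zero_le_one g hg')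
      (hYint 1 le_rfl g hg') (hYint 0 zero_le_one g hg') hZ hst (hD g hg')]
    exact setIntegral_congr_fun (hZ hst) fun ω hω => by
      rw [hYa_fiber, hYa_fiber, show G ω = g from hω.2]
  have hpop : ∀ s, μ (S ⁻¹' {s}) ≠ 0 →
      ∫ ω, (Ya 1 ω - Ya 0 ω) ∂μ[|{ω | S ω = s}] = ∫ ω, (W1 1 - W1 0) ω ∂μ := fun s hs => by
    rw [integral_cond_eq_inv_mul_setIntegral, show {ω | S ω = s} = S ⁻¹' {s} from rfl,
      setIntegral_preimage_eq_mul_integral_of_forall_fiber (f := fun ω => Ya 1 ω - Ya 0 ω) hH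
        hSmeas hSH hGmeas hGmem (measurableSet_singleton s)
        ((hYaint 1 le_rfl).sub (hYaint 0 zero_le_one)) stronglyMeasurable_condExp
        integrable_condExp (hstratum s),
      integral_condExp hH, inv_mul_cancel_left₀ ((measureReal_ne_zero_iff (measure_ne_top μ _)).2 hs)]
  rw [hpop 1 (hSpos 1 (Or.inl rfl)).ne', hpop 2 (hSpos 2 (Or.inr rfl)).ne']

/-- **Additive outcome model kills the transport bias (Proposition 2).**  Suppose that,
in addition to the transportability assumptions,
`Y^(a,g) = W₀ + W₁(a) + W₂(g) + ε_{a,g}`, where `W₀, W₁(a), W₂(g)` are square-integrable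
random variables measurable with respect to a σ-algebra `𝓒` of covariate information with
`𝓗 ⊆ 𝓒`, and each noise term `ε_{a,g}` has mean zero and zero covariance with every bounded
`𝓒`-measurable random variable.  Then `φ₁ = φ₂` (equivalently `T₃ = 0`, so the bias of the
naive estimator for `φ₂` equals its bias for `φ₁`). -/
theorem additive_model_no_transport_bias
    {Ω : Type*} [mΩ : MeasurableSpace Ω] [StandardBorelSpace Ω] [Nonempty Ω]
    (μ : Measure Ω) [IsProbabilityMeasure μ]
    (gmax : ℕ)
    (S A G : Ω → ℕ)
    (hS : ∀ ω, S ω = 1 ∨ S ω = 2) (hSmeas : Measurable S)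
    (hSpos : ∀ s, (s = 1 ∨ s = 2) → 0 < μ {ω | S ω = s})
    (hA : ∀ ω, A ω ≤ 1) (hG : ∀ ω, G ω ≤ gmax)
    (hAmeas : Measurable A) (hGmeas : Measurable G)
    (Ypo : ℕ → ℕ → Ω → ℝ)
    (hYpomeas : ∀ a ≤ 1, ∀ g ≤ gmax, Measurable (Ypo a g))
    (hYposq : ∀ a ≤ 1, ∀ g ≤ gmax, MemLp (Ypo a g) 2 μ)
    (Ya : ℕ → Ω → ℝ)
    (hYa : ∀ a ω, Ya a ω = ∑ g ∈ Finset.range (gmax + 1), ind {ω' | G ω' = g} ω * Ypo a g ω)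
    (Y : Ω → ℝ)
    (hY : ∀ ω, Y ω = ind {ω' | A ω' = 1} ω * Ya 1 ω + ind {ω' | A ω' = 0} ω * Ya 0 ω)
    (mH : MeasurableSpace Ω) (hH : mH ≤ mΩ)
    (pg : ℕ → ℕ → Ω → ℝ)
    (hpg : ∀ s g, pg s g = (μ[|{ω | S ω = s}])[ind {ω | G ω = g} | mH])
    (hpgbdd : ∀ s g, ∀ᵐ ω ∂μ, 0 ≤ pg s g ω ∧ pg s g ω ≤ 1)
    (hpgmeas : ∀ s g, Measurable[mH] (pg s g))
    (htrans : ∀ a ≤ 1, ∀ g ≤ gmax,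
      CondIndepFun mH hH (Ypo a g) (fun ω => (S ω, G ω)) μ)
    (hSH : Indep (MeasurableSpace.comap S inferInstance) mH μ)
    -- the additive outcome generating model
    (mC : MeasurableSpace Ω) (hHC : mH ≤ mC) (hC : mC ≤ mΩ)
    (W0 : Ω → ℝ) (W1 W2 : ℕ → Ω → ℝ) (noise : ℕ → ℕ → Ω → ℝ)
    (hW0meas : Measurable[mC] W0)
    (hW1meas : ∀ a ≤ 1, Measurable[mC] (W1 a))
    (hW2meas : ∀ g ≤ gmax, Measurable[mC] (W2 g))
    (hW0sq : MemLp W0 2 μ)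
    (hW1sq : ∀ a ≤ 1, MemLp (W1 a) 2 μ)
    (hW2sq : ∀ g ≤ gmax, MemLp (W2 g) 2 μ)
    (hmodel : ∀ a ≤ 1, ∀ g ≤ gmax, ∀ ω,
      Ypo a g ω = W0 ω + W1 a ω + W2 g ω + noise a g ω)
    (hnoise_mean : ∀ a ≤ 1, ∀ g ≤ gmax, ∫ ω, noise a g ω ∂μ = 0)
    (hnoise_uncorr : ∀ a ≤ 1, ∀ g ≤ gmax, ∀ h : Ω → ℝ, Measurable[mC] h →
      (∃ c : ℝ, ∀ ω, |h ω| ≤ c) → cov μ (noise a g) h = 0) :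
    ∫ ω, (Ya 1 ω - Ya 0 ω) ∂(μ[|{ω | S ω = 1}])
      = ∫ ω, (Ya 1 ω - Ya 0 ω) ∂(μ[|{ω | S ω = 2}]) :=
  additive_model_no_transport_bias_general (mΩ := mΩ) μ gmax S G hSmeas hSpos hG hGmeas Ypo hYpomeas
    hYposq Ya hYa mH hH htrans hSH mC hHC W0 W1 W2 noise hW0sq hW1sq hW2sq hmodel hnoise_mean
    hnoise_uncorr
end
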